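/- Let 𝒜 be an admissible Banach A-valued function algebra on X with 𝔄 = 𝒜 ∩ C(X). If the map 𝒥 : Δ(𝔄) × Δ(A) → Δ(𝒜), 𝒥(ψ,φ)(f) = ψ(φ∘f), is surjective, then it is a homeomorphism with respect to the Gelfand topologies. -/

import Mathlib

/-!
Evaluating `τ = 𝒥(ψ, φ)` at the constant function `κ a` gives `φ a`, and at an element of `𝒜`
equal to `g·𝟏` (`g ∈ 𝔄`) gives `ψ g`. So `𝒥` is injective and every coordinate of its inverse
is an evaluation of `τ`, hence continuous for the Gelfand topologies. Since `Δ(𝒜)` is compact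
and `Δ(𝔄) × Δ(A)` is Hausdorff, the continuous bijection `𝒥⁻¹` is a homeomorphism.
-/

open WeakDual

variable {X : Type*} [TopologicalSpace X] [CompactSpace X] [T2Space X] [Nonempty X]
variable {A : Type*} [NormedCommRing A] [NormedAlgebra ℂ A] [CompleteSpace A] [Nontrivial A]
variable {B : Type*} [NormedCommRing B] [NormedAlgebra ℂ B] [CompleteSpace B]

/-- The embedding of scalar-valued continuous functions into `A`-valued ones,
`g ↦ g·𝟏`. -/
noncomputable def scalHom (X A : Type*) [TopologicalSpace X] [NormedCommRing A]
    [NormedAlgebra ℂ A] : C(X, ℂ) →ₐ[ℂ] C(X, A) :=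
  AlgHom.compLeftContinuous ℂ (Algebra.ofId ℂ A) (continuous_algebraMap ℂ A)

/-- The scalar subalgebra `𝔄 = 𝒜 ∩ C(X)`, realized inside `C(X, ℂ)`: those scalar
functions `g` with `g·𝟏 ∈ 𝒜`. -/
noncomputable def scalarSub (ι : B →ₐ[ℂ] C(X, A)) : Subalgebra ℂ C(X, ℂ) :=
  Subalgebra.comap (scalHom X A) (AlgHom.range ι)

/-- The Gelfand topology on a character space: the topology of pointwise convergence. -/
noncomputable instance algHomGelfandTopology (R : Type*) [Semiring R] [Algebra ℂ R] :
    TopologicalSpace (R →ₐ[ℂ] ℂ) :=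
  TopologicalSpace.induced (fun ψ => (ψ : R → ℂ)) inferInstance

section GelfandTopology

variable {R : Type*} [Semiring R] [Algebra ℂ R]

theorem isEmbedding_algHom_coe : Topology.IsEmbedding fun ψ : R →ₐ[ℂ] ℂ => (ψ : R → ℂ) :=
  ⟨⟨rfl⟩, DFunLike.coe_injective⟩

instance : T2Space (R →ₐ[ℂ] ℂ) := isEmbedding_algHom_coe.t2Space

theorem continuous_algHom_iff {Y : Type*} [TopologicalSpace Y] {F : Y → R →ₐ[ℂ] ℂ} :
    Continuous F ↔ ∀ r, Continuous fun y => F y r :=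
  continuous_induced_rng.trans continuous_pi_iff

theorem continuous_algHom_apply (r : R) : Continuous fun ψ : R →ₐ[ℂ] ℂ => ψ r :=
  continuous_algHom_iff.mp continuous_id r

end GelfandTopology

instance {R : Type*} [NormedRing R] [NormedAlgebra ℂ R] [CompleteSpace R] :
    CompactSpace (R →ₐ[ℂ] ℂ) :=
  CharacterSpace.equivAlgHom.surjective.compactSpace <|
    continuous_algHom_iff.mpr fun r => (eval_continuous r).comp continuous_subtype_val

section JointCharacter

variable (ι : B →ₐ[ℂ] C(X, A))

noncomputable def scalarLift (g : scalarSub ι) : B :=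
  ((AlgHom.mem_range _).mp ((Subalgebra.mem_comap _ _ _).mp g.2)).choose

theorem apply_scalarLift (g : scalarSub ι) (x : X) :
    ι (scalarLift ι g) x = algebraMap ℂ A ((g : C(X, ℂ)) x) :=
  DFunLike.congr_fun ((AlgHom.mem_range _).mp ((Subalgebra.mem_comap _ _ _).mp g.2)).choose_spec x

variable (hadm : ∀ (f : B) (φ : A →ₐ[ℂ] ℂ), ∃ g : B, ∀ x : X, ι g x = algebraMap ℂ A (φ (ι f x)))

noncomputable def compCharacter (φ : A →ₐ[ℂ] ℂ) : B →ₐ[ℂ] scalarSub ι where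
  toFun f := ⟨⟨fun x => φ (ι f x), (map_continuous φ).comp (ι f).continuous⟩,
    (Subalgebra.mem_comap _ _ _).mpr ((AlgHom.mem_range _).mpr
      ⟨(hadm f φ).choose, ContinuousMap.ext (hadm f φ).choose_spec⟩)⟩
  map_one' := Subtype.ext <| ContinuousMap.ext fun x => by simp
  map_mul' _ _ := Subtype.ext <| ContinuousMap.ext fun x => by simp
  map_zero' := Subtype.ext <| ContinuousMap.ext fun x => by simp
  map_add' _ _ := Subtype.ext <| ContinuousMap.ext fun x => by simp
  commutes' _ := Subtype.ext <| ContinuousMap.ext fun x => by simp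

/-- The map `𝒥 : Δ(𝔄) × Δ(A) → Δ(𝒜)`, `𝒥(ψ, φ)(f) = ψ(φ ∘ f)`. -/
noncomputable def jointCharacter (p : (scalarSub ι →ₐ[ℂ] ℂ) × (A →ₐ[ℂ] ℂ)) : B →ₐ[ℂ] ℂ :=
  p.1.comp (compCharacter ι hadm p.2)

variable {ι hadm}

theorem jointCharacter_apply_of_eq {p : (scalarSub ι →ₐ[ℂ] ℂ) × (A →ₐ[ℂ] ℂ)} {f : B}
    {g₀ : scalarSub ι} (hg₀ : ∀ x : X, (g₀ : C(X, ℂ)) x = p.2 (ι f x)) :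
    jointCharacter ι hadm p f = p.1 g₀ :=
  congrArg p.1 (Subtype.ext (ContinuousMap.ext fun x => (hg₀ x).symm))

theorem jointCharacter_apply_scalarLift (p : (scalarSub ι →ₐ[ℂ] ℂ) × (A →ₐ[ℂ] ℂ))
    (g : scalarSub ι) : jointCharacter ι hadm p (scalarLift ι g) = p.1 g :=
  jointCharacter_apply_of_eq fun x => by rw [apply_scalarLift, AlgHom.commutes]; rfl

theorem jointCharacter_apply_const {κ : A →ₐ[ℂ] B}
    (hκ : ∀ a : A, ι (κ a) = ContinuousMap.const X a)
    (p : (scalarSub ι →ₐ[ℂ] ℂ) × (A →ₐ[ℂ] ℂ)) (a : A) :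
    jointCharacter ι hadm p (κ a) = p.2 a := by
  rw [jointCharacter_apply_of_eq (g₀ := algebraMap ℂ _ (p.2 a)) fun x => by
    rw [hκ]; rfl, AlgHom.commutes]
  rfl

theorem jointCharacter_injective {κ : A →ₐ[ℂ] B}
    (hκ : ∀ a : A, ι (κ a) = ContinuousMap.const X a) :
    Function.Injective (jointCharacter ι hadm) := by
  rintro p q h
  ext g
  · simpa only [jointCharacter_apply_scalarLift] using DFunLike.congr_fun h (scalarLift ι g)
  · simpa only [jointCharacter_apply_const hκ] using DFunLike.congr_fun h (κ g)

theorem continuous_of_jointCharacter_rightInverse {κ : A →ₐ[ℂ] B}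
    (hκ : ∀ a : A, ι (κ a) = ContinuousMap.const X a)
    {K : (B →ₐ[ℂ] ℂ) → (scalarSub ι →ₐ[ℂ] ℂ) × (A →ₐ[ℂ] ℂ)}
    (hK : ∀ τ, jointCharacter ι hadm (K τ) = τ) : Continuous K := by
  refine .prodMk (continuous_algHom_iff.mpr fun g => ?_) (continuous_algHom_iff.mpr fun a => ?_)
  · refine (continuous_algHom_apply (scalarLift ι g)).congr fun τ => ?_
    conv_lhs => rw [← hK τ]
    exact jointCharacter_apply_scalarLift _ g
  · refine (continuous_algHom_apply (κ a)).congr fun τ => ?_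
    conv_lhs => rw [← hK τ]
    exact jointCharacter_apply_const hκ _ a

end JointCharacter

theorem stmt13_general
(ι : B →ₐ[ℂ] C(X, A))
    (κ : A →ₐ[ℂ] B) (hκ : ∀ a : A, ι (κ a) = ContinuousMap.const X a)
    (hadm : ∀ (f : B) (φ : A →ₐ[ℂ] ℂ), ∃ g : B, ∀ x : X, ι g x = algebraMap ℂ A (φ (ι f x)))
    (hsurj : ∀ τ : B →ₐ[ℂ] ℂ, ∃ (ψ : ↥(scalarSub ι) →ₐ[ℂ] ℂ) (φ : A →ₐ[ℂ] ℂ),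
      ∀ (f : B) (g₀ : ↥(scalarSub ι)),
        (∀ x : X, (g₀ : C(X, ℂ)) x = φ (ι f x)) → τ f = ψ g₀) :
    ∃ H : ((↥(scalarSub ι) →ₐ[ℂ] ℂ) × (A →ₐ[ℂ] ℂ)) ≃ₜ (B →ₐ[ℂ] ℂ),
      ∀ (ψ : ↥(scalarSub ι) →ₐ[ℂ] ℂ) (φ : A →ₐ[ℂ] ℂ) (f : B) (g₀ : ↥(scalarSub ι)),
        (∀ x : X, (g₀ : C(X, ℂ)) x = φ (ι f x)) → H (ψ, φ) f = ψ g₀ := by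
  have hJsurj : Function.Surjective (jointCharacter ι hadm) := fun τ => by
    obtain ⟨ψ, φ, hτ⟩ := hsurj τ
    exact ⟨(ψ, φ), AlgHom.ext fun f => (hτ f _ fun _ => rfl).symm⟩
  let J := Equiv.ofBijective _ ⟨jointCharacter_injective hκ, hJsurj⟩
  have hJinv : Continuous J.symm :=
    continuous_of_jointCharacter_rightInverse hκ J.apply_symm_apply
  exact ⟨hJinv.homeoOfEquivCompactToT2.symm, fun _ _ _ _ h => jointCharacter_apply_of_eq h⟩

/-- If the map 𝒥 : Δ(𝔄) × Δ(A) → Δ(𝒜), 𝒥(ψ,φ)(f) = ψ(φ∘f), is surjective, then it is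
a homeomorphism with respect to the Gelfand topologies. -/
theorem stmt13
(ι : B →ₐ[ℂ] C(X, A)) (hinj : Function.Injective ι)
    (κ : A →ₐ[ℂ] B) (hκ : ∀ a : A, ι (κ a) = ContinuousMap.const X a)
    (hκnorm : ∃ c₁ > (0:ℝ), ∃ c₂ > (0:ℝ), ∀ a : A, c₁ * ‖a‖ ≤ ‖κ a‖ ∧ ‖κ a‖ ≤ c₂ * ‖a‖)
    (hdom : ∀ f : B, ‖ι f‖ ≤ ‖f‖)
    (hsep : ∀ x y : X, x ≠ y → ∀ M : Ideal A, M.IsMaximal → ∃ f : B, ι f x - ι f y ∉ M)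
    (hss : Ideal.jacobson (⊥ : Ideal A) = ⊥)
    (hadm : ∀ (f : B) (φ : A →ₐ[ℂ] ℂ), ∃ g : B, ∀ x : X, ι g x = algebraMap ℂ A (φ (ι f x)))
    (hsurj : ∀ τ : B →ₐ[ℂ] ℂ, ∃ (ψ : ↥(scalarSub ι) →ₐ[ℂ] ℂ) (φ : A →ₐ[ℂ] ℂ),
      ∀ (f : B) (g₀ : ↥(scalarSub ι)),
        (∀ x : X, (g₀ : C(X, ℂ)) x = φ (ι f x)) → τ f = ψ g₀) :
    ∃ H : ((↥(scalarSub ι) →ₐ[ℂ] ℂ) × (A →ₐ[ℂ] ℂ)) ≃ₜ (B →ₐ[ℂ] ℂ),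
      ∀ (ψ : ↥(scalarSub ι) →ₐ[ℂ] ℂ) (φ : A →ₐ[ℂ] ℂ) (f : B) (g₀ : ↥(scalarSub ι)),
        (∀ x : X, (g₀ : C(X, ℂ)) x = φ (ι f x)) → H (ψ, φ) f = ψ g₀ :=
  stmt13_general ι κ hκ hadm hsurj
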